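/- arXiv:1504.08358 — 3 statements merged into one kernel-verified Lean document; each statement's English description precedes it below -/
import Mathlib

section
/- Let ψ : ℝ^d → [0,∞) be a negative definite function of the form ψ(ξ) = ∫_{ℝ^d} (1 - cos⟨ξ,x⟩) ν(dx) + η‖ξ‖² with η ≥ 0 and ν a Lévy measure (a measure on ℝ^d \ {0} with ∫ min(1,‖x‖²) ν(dx) < ∞). Define ψ*(u) = sup_{‖ξ‖ ≤ u} ψ(ξ). Then for all r, u ≥ 0, ψ*(r u) ≤ 2(r² + 1) ψ*(u). -/
open MeasureTheory Real Set
open scoped InnerProductSpace ENNReal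

lemma aux_abs_sin_nat (x : ℝ) : ∀ n : ℕ, |Real.sin (n * x)| ≤ n * |Real.sin x| := by
  intro n
  induction n with
  | zero => simp
  | succ n ih =>
    have h : ((n : ℝ) + 1) * x = n * x + x := by ring
    push_cast
    rw [h, Real.sin_add]
    have hc1 := Real.abs_cos_le_one x
    have hc2 := Real.abs_cos_le_one ((n : ℝ) * x)
    have hs1 := abs_nonneg (Real.sin ((n : ℝ) * x))
    have hs2 := abs_nonneg (Real.sin x)
    calc |Real.sin (n * x) * Real.cos x + Real.cos (n * x) * Real.sin x|
        ≤ |Real.sin (n * x) * Real.cos x| + |Real.cos (n * x) * Real.sin x| := abs_add_le _ _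
      _ = |Real.sin (n * x)| * |Real.cos x| + |Real.cos (n * x)| * |Real.sin x| := by
          rw [abs_mul, abs_mul]
      _ ≤ ((n : ℝ) + 1) * |Real.sin x| := by nlinarith

lemma aux_cos_nat (n : ℕ) (x : ℝ) :
    1 - Real.cos (n * x) ≤ (n : ℝ) ^ 2 * (1 - Real.cos x) := by
  have h1 := Real.sin_sq_eq_half_sub (n * (x / 2))
  have h2 := Real.sin_sq_eq_half_sub (x / 2)
  have hb := aux_abs_sin_nat (x / 2) n
  have hb2 : Real.sin (n * (x / 2)) ^ 2 ≤ (n : ℝ) ^ 2 * Real.sin (x / 2) ^ 2 := by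
    have := mul_self_le_mul_self (abs_nonneg _) hb
    rw [← sq_abs, ← sq_abs (Real.sin (x / 2))]
    nlinarith [abs_nonneg (Real.sin (x/2))]
  have he : 2 * (n * (x / 2)) = n * x := by ring
  have he2 : 2 * (x / 2) = x := by ring
  rw [he] at h1
  rw [he2] at h2
  nlinarith

lemma aux_one_sub_cos_le (t : ℝ) : 1 - Real.cos t ≤ t ^ 2 / 2 := by
  have h2 := Real.sin_sq_eq_half_sub (t / 2)
  have hb : |Real.sin (t / 2)| ≤ |t / 2| := Real.abs_sin_le_abs
  have : Real.sin (t / 2) ^ 2 ≤ (t / 2) ^ 2 := by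
    rw [← sq_abs, ← sq_abs (t / 2)]
    exact pow_le_pow_left₀ (abs_nonneg _) hb 2
  have he : 2 * (t / 2) = t := by ring
  rw [he] at h2
  nlinarith

theorem stmt_1 (d : ℕ) (hd : 0 < d)
    (ν : Measure (EuclideanSpace ℝ (Fin d)))
    (hν0 : ν {0} = 0)
    (hνint : ∫⁻ x, ENNReal.ofReal (min 1 (‖x‖ ^ 2)) ∂ν < ⊤)
    (η : ℝ) (hη : 0 ≤ η)
    (ψ : EuclideanSpace ℝ (Fin d) → ℝ)
    (hψ : ∀ ξ, ψ ξ = (∫ x, (1 - Real.cos ⟪ξ, x⟫_ℝ) ∂ν) + η * ‖ξ‖ ^ 2)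
    (ψstar : ℝ → ℝ)
    (hψstar : ∀ u, ψstar u = sSup (ψ '' {ξ | ‖ξ‖ ≤ u})) :
    ∀ r u : ℝ, 0 ≤ r → 0 ≤ u → ψstar (r * u) ≤ 2 * (r ^ 2 + 1) * ψstar u := by
  have hcosnn : ∀ t : ℝ, 0 ≤ 1 - Real.cos t := fun t => by linarith [Real.cos_le_one t]
  -- pointwise bound
  have hbound : ∀ (ξ x : EuclideanSpace ℝ (Fin d)),
      1 - Real.cos ⟪ξ, x⟫_ℝ ≤ max 2 (‖ξ‖ ^ 2) * min 1 (‖x‖ ^ 2) := by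
    intro ξ x
    rcases le_or_gt (‖x‖ ^ 2) 1 with h | h
    · rw [min_eq_right h]
      have ht : ⟪ξ, x⟫_ℝ ^ 2 ≤ ‖ξ‖ ^ 2 * ‖x‖ ^ 2 := by
        have := abs_real_inner_le_norm ξ x
        nlinarith [abs_nonneg ⟪ξ, x⟫_ℝ, sq_abs ⟪ξ, x⟫_ℝ, norm_nonneg ξ, norm_nonneg x]
      have h1 := aux_one_sub_cos_le ⟪ξ, x⟫_ℝ
      have h2 : ‖ξ‖ ^ 2 ≤ max 2 (‖ξ‖ ^ 2) := le_max_right _ _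
      nlinarith [sq_nonneg (‖x‖)]
    · rw [min_eq_left h.le]
      have := Real.neg_one_le_cos ⟪ξ, x⟫_ℝ
      have h2 : (2 : ℝ) ≤ max 2 (‖ξ‖ ^ 2) := le_max_left _ _
      linarith
  have hmeas : ∀ ξ : EuclideanSpace ℝ (Fin d),
      AEStronglyMeasurable (fun x => 1 - Real.cos ⟪ξ, x⟫_ℝ) ν :=
    fun ξ => (continuous_const.sub
      (Real.continuous_cos.comp (continuous_const.inner continuous_id))).aestronglyMeasurable
  have hminnn : ∀ x : EuclideanSpace ℝ (Fin d), 0 ≤ min 1 (‖x‖ ^ 2) := fun x =>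
    le_min zero_le_one (sq_nonneg _)
  have hintmin : Integrable (fun x => min 1 (‖x‖ ^ 2)) ν := by
    refine ⟨(continuous_const.min (continuous_norm.pow 2)).aestronglyMeasurable, ?_⟩
    rw [hasFiniteIntegral_iff_ofReal (ae_of_all _ hminnn)]
    exact hνint
  have hint : ∀ ξ : EuclideanSpace ℝ (Fin d),
      Integrable (fun x => 1 - Real.cos ⟪ξ, x⟫_ℝ) ν := by
    intro ξ
    refine (hintmin.const_mul (max 2 (‖ξ‖ ^ 2))).mono' (hmeas ξ) (ae_of_all _ fun x => ?_)
    rw [Real.norm_eq_abs, abs_of_nonneg (hcosnn _)]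
    exact hbound ξ x
  have hψnn : ∀ ξ, 0 ≤ ψ ξ := by
    intro ξ
    rw [hψ]
    have : 0 ≤ ∫ x, (1 - Real.cos ⟪ξ, x⟫_ℝ) ∂ν := integral_nonneg fun x => hcosnn _
    positivity
  have hψ0 : ψ 0 = 0 := by
    rw [hψ]
    simp
  have hbdd : ∀ u : ℝ, 0 ≤ u → BddAbove (ψ '' {ξ | ‖ξ‖ ≤ u}) := by
    intro u hu
    refine ⟨(∫ x, max 2 (u ^ 2) * min 1 (‖x‖ ^ 2) ∂ν) + η * u ^ 2, ?_⟩
    rintro _ ⟨ξ, hξ, rfl⟩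
    rw [hψ]
    have hξ' : ‖ξ‖ ≤ u := hξ
    refine add_le_add ?_ (mul_le_mul_of_nonneg_left (by nlinarith [norm_nonneg ξ]) hη)
    refine integral_mono (hint ξ) (hintmin.const_mul _) fun x => ?_
    refine (hbound ξ x).trans (mul_le_mul_of_nonneg_right ?_ (hminnn x))
    exact max_le_max le_rfl (by nlinarith [norm_nonneg ξ])
  have hψstar_nn : ∀ u : ℝ, 0 ≤ u → 0 ≤ ψstar u := by
    intro u hu
    rw [hψstar]
    rw [← hψ0]
    exact le_csSup (hbdd u hu) ⟨0, by simp [hu], rfl⟩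
  intro r u hr hu
  have hrhsnn : 0 ≤ 2 * (r ^ 2 + 1) * ψstar u := by
    have := hψstar_nn u hu
    positivity
  rcases eq_or_lt_of_le hr with hr0 | hrpos
  · -- r = 0
    rw [hψstar]
    refine csSup_le ⟨ψ 0, 0, by simp [mul_nonneg hr hu], rfl⟩ ?_
    rintro _ ⟨ξ, hξ, rfl⟩
    have hξ0 : ξ = 0 := by
      have : ‖ξ‖ ≤ 0 := by simpa [← hr0] using hξ
      simpa using le_antisymm this (norm_nonneg ξ)
    rw [hξ0, hψ0]
    exact hrhsnn
  · set n : ℕ := ⌈r⌉₊ with hn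
    have hnpos : 0 < n := Nat.ceil_pos.2 hrpos
    have hrn : r ≤ (n : ℝ) := Nat.le_ceil r
    have hnr : (n : ℝ) ≤ r + 1 := (Nat.ceil_lt_add_one hr).le
    have hn2 : (n : ℝ) ^ 2 ≤ 2 * (r ^ 2 + 1) := by
      have h1 : (n : ℝ) ^ 2 ≤ (r + 1) ^ 2 := by nlinarith
      nlinarith [sq_nonneg (r - 1)]
    rw [hψstar]
    refine csSup_le ⟨ψ 0, 0, by simp [mul_nonneg hr hu], rfl⟩ ?_
    rintro _ ⟨ξ, hξ, rfl⟩
    have hξ' : ‖ξ‖ ≤ r * u := hξ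
    set ζ : EuclideanSpace ℝ (Fin d) := (n : ℝ)⁻¹ • ξ with hζdef
    have hnne : (n : ℝ) ≠ 0 := by positivity
    have hζnorm : ‖ζ‖ ≤ u := by
      rw [hζdef, norm_smul, norm_inv, Real.norm_natCast]
      rw [inv_mul_le_iff₀ (by positivity)]
      calc ‖ξ‖ ≤ r * u := hξ'
        _ ≤ (n : ℝ) * u := mul_le_mul_of_nonneg_right hrn hu
    have hξζ : ξ = (n : ℝ) • ζ := by
      rw [hζdef, smul_inv_smul₀ hnne]
    have hinner : ∀ x : EuclideanSpace ℝ (Fin d), ⟪ξ, x⟫_ℝ = (n : ℝ) * ⟪ζ, x⟫_ℝ := by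
      intro x
      rw [hξζ, real_inner_smul_left]
    have hnormξ : ‖ξ‖ ^ 2 = (n : ℝ) ^ 2 * ‖ζ‖ ^ 2 := by
      rw [hξζ, norm_smul, Real.norm_natCast, mul_pow]
    have step1 : ψ ξ ≤ (n : ℝ) ^ 2 * ψ ζ := by
      rw [hψ ξ, hψ ζ, mul_add]
      have hint2 : ∫ x, (n : ℝ) ^ 2 * (1 - Real.cos ⟪ζ, x⟫_ℝ) ∂ν
          = (n : ℝ) ^ 2 * ∫ x, (1 - Real.cos ⟪ζ, x⟫_ℝ) ∂ν := integral_const_mul _ _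
      have hmono : (∫ x, (1 - Real.cos ⟪ξ, x⟫_ℝ) ∂ν)
          ≤ ∫ x, (n : ℝ) ^ 2 * (1 - Real.cos ⟪ζ, x⟫_ℝ) ∂ν := by
        refine integral_mono (hint ξ) ((hint ζ).const_mul _) fun x => ?_
        rw [hinner x]
        exact aux_cos_nat n ⟪ζ, x⟫_ℝ
      rw [hint2] at hmono
      have : η * ‖ξ‖ ^ 2 = (n : ℝ) ^ 2 * (η * ‖ζ‖ ^ 2) := by rw [hnormξ]; ring
      linarith
    have step2 : ψ ζ ≤ ψstar u := by
      rw [hψstar]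
      exact le_csSup (hbdd u hu) ⟨ζ, hζnorm, rfl⟩
    calc ψ ξ ≤ (n : ℝ) ^ 2 * ψ ζ := step1
      _ ≤ (n : ℝ) ^ 2 * ψstar u := mul_le_mul_of_nonneg_left step2 (by positivity)
      _ ≤ 2 * (r ^ 2 + 1) * ψstar u :=
          mul_le_mul_of_nonneg_right hn2 (hψstar_nn u hu)
end

section
/- Let X be an isotropic Lévy process on ℝ^d with characteristic exponent ψ, i.e. E[exp(i⟨ξ, X_t⟩)] = exp(-t ψ(ξ)) with ψ radial. Set F_t(r) = P(‖X_t‖ ≥ √r). Then for all λ, t > 0, λ ∫_0^∞ e^{-λ r} F_t(r) dr = (2^{1-d}/Γ(d/2)) ∫_0^∞ (1 - e^{-t ψ(r√λ)}) e^{-r²/4} r^{d-1} dr. -/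
/-!
Since `1 - e^{-λ s}` is the primitive of `λ e^{-λ r}`, the layer-cake formula turns the left-hand
side into `E[1 - exp (-λ ‖X_t‖²)]`. Writing `1 - e^{-‖x‖²}` as a Gaussian average of
`1 - cos ⟪x, ξ⟫` and applying Fubini, this becomes a Gaussian average of
`1 - E[cos ⟪√λ ξ, X_t⟫] = 1 - e^{-t ψ(√λ ‖ξ‖)}`, a radial function of `ξ`; polar coordinates
reduce it to the one-dimensional integral on the right.
-/

open MeasureTheory Real Set
open scoped InnerProductSpace

theorem integral_mul_exp_neg_mul (lam a : ℝ) :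
    ∫ r in (0 : ℝ)..a, lam * exp (-lam * r) = 1 - exp (-lam * a) := by
  have hderiv : ∀ r ∈ uIcc 0 a,
      HasDerivAt (fun r => -exp (-lam * r)) (lam * exp (-lam * r)) r := fun r _ => by
    simpa [mul_comm] using (((hasDerivAt_id r).const_mul (-lam)).exp).fun_neg
  rw [intervalIntegral.integral_eq_sub_of_hasDerivAt hderiv
    ((by fun_prop : Continuous _).intervalIntegrable _ _)]
  simp only [mul_zero, exp_zero]
  ring

theorem mul_integral_exp_neg_mul_measureReal_le {α : Type*} [MeasurableSpace α]
    (ν : Measure α) [IsFiniteMeasure ν] {f : α → ℝ} (hf_nonneg : 0 ≤ f) (hf : Measurable f)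
    {lam : ℝ} (hlam : 0 < lam) :
    lam * ∫ r in Ioi 0, exp (-lam * r) * ν.real {x | r ≤ f x} =
      ∫ x, (1 - exp (-lam * f x)) ∂ν := by
  have hlayer := lintegral_comp_eq_lintegral_meas_le_mul ν (.of_forall hf_nonneg)
    hf.aemeasurable (g := fun r => lam * exp (-lam * r))
    (fun _ _ => (by fun_prop : Continuous _).intervalIntegrable _ _)
    (.of_forall fun r => by positivity)
  simp only [integral_mul_exp_neg_mul lam] at hlayer
  have htail : Antitone fun r => ν.real {x | r ≤ f x} :=
    fun r s hrs => measureReal_mono fun x (hx : s ≤ f x) => hrs.trans hx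
  have hintegrand_nonneg (x : α) : 0 ≤ 1 - exp (-lam * f x) := by
    simpa using mul_nonneg hlam.le (hf_nonneg x)
  rw [integral_eq_lintegral_of_nonneg_ae (.of_forall hintegrand_nonneg) (by fun_prop), hlayer,
    ← integral_const_mul, integral_eq_lintegral_of_nonneg_ae
      (.of_forall fun r => mul_nonneg hlam.le (mul_nonneg (exp_pos _).le measureReal_nonneg))
      (((by fun_prop : Continuous _).measurable.mul htail.measurable).const_mul
        lam).aestronglyMeasurable]
  congr 1
  refine setLIntegral_congr_fun measurableSet_Ioi fun r _ => ?_
  rw [← mul_assoc, mul_comm, ENNReal.ofReal_mul measureReal_nonneg, ofReal_measureReal,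
    mul_comm lam]

section Gaussian

variable {V : Type*} [NormedAddCommGroup V] [InnerProductSpace ℝ V] [FiniteDimensional ℝ V]
  [MeasurableSpace V] [BorelSpace V]

theorem integral_exp_neg_sq_norm_div_four_mul_cos_inner (y : V) :
    ∫ ξ : V, exp (-‖ξ‖ ^ 2 / 4) * cos ⟪y, ξ⟫_ℝ =
      (4 * π) ^ ((Module.finrank ℝ V : ℝ) / 2) * exp (-‖y‖ ^ 2) := by
  have hb : (0 : ℝ) < (1 / 4 : ℂ).re := by norm_num
  have hre := integral_re (𝕜 := ℂ)
    (GaussianFourier.integrable_cexp_neg_mul_sq_norm_add hb Complex.I y)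
  rw [GaussianFourier.integral_cexp_neg_mul_sq_norm_add hb Complex.I y] at hre
  have hbase : (π : ℂ) / (1 / 4) = ((4 * π : ℝ) : ℂ) := by push_cast; ring
  have hpow : (Module.finrank ℝ V : ℂ) / 2 = ((Module.finrank ℝ V / 2 : ℝ) : ℂ) := by
    push_cast; rfl
  have hexp : Complex.I ^ 2 * (‖y‖ : ℂ) ^ 2 / (4 * (1 / 4)) = ((-‖y‖ ^ 2 : ℝ) : ℂ) := by
    rw [Complex.I_sq]; push_cast; ring
  rw [hbase, hpow, hexp, ← Complex.ofReal_cpow (by positivity), ← Complex.ofReal_exp,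
    ← Complex.ofReal_mul, RCLike.re_to_complex, Complex.ofReal_re] at hre
  rw [← hre]
  refine integral_congr_ae (.of_forall fun ξ => ?_)
  have hexponent : -(1 / 4 : ℂ) * (‖ξ‖ : ℂ) ^ 2 + Complex.I * (⟪y, ξ⟫_ℝ : ℂ) =
      ((-‖ξ‖ ^ 2 / 4 : ℝ) : ℂ) + (⟪y, ξ⟫_ℝ : ℂ) * Complex.I := by push_cast; ring
  simp only [RCLike.re_to_complex, hexponent, Complex.exp_re, Complex.add_re, Complex.add_im,
    Complex.ofReal_re, Complex.ofReal_im, Complex.re_ofReal_mul, Complex.im_ofReal_mul,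
    Complex.I_re, Complex.I_im, mul_zero, mul_one, add_zero, zero_add]

theorem integral_exp_neg_sq_norm_div_four :
    ∫ ξ : V, exp (-‖ξ‖ ^ 2 / 4) = (4 * π) ^ ((Module.finrank ℝ V : ℝ) / 2) := by
  simpa using integral_exp_neg_sq_norm_div_four_mul_cos_inner (0 : V)

theorem integrable_exp_neg_sq_norm_div_four : Integrable fun ξ : V => exp (-‖ξ‖ ^ 2 / 4) :=
  Integrable.of_integral_ne_zero <| by
    rw [integral_exp_neg_sq_norm_div_four]; positivity

theorem one_sub_exp_neg_sq_norm_eq_integral (x : V) :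
    1 - exp (-‖x‖ ^ 2) = ((4 * π) ^ ((Module.finrank ℝ V : ℝ) / 2))⁻¹ *
      ∫ ξ : V, exp (-‖ξ‖ ^ 2 / 4) * (1 - cos ⟪x, ξ⟫_ℝ) := by
  have hcos : Integrable fun ξ : V => exp (-‖ξ‖ ^ 2 / 4) * cos ⟪x, ξ⟫_ℝ :=
    integrable_exp_neg_sq_norm_div_four.mul_bdd (c := 1) (by fun_prop)
      (.of_forall fun ξ => abs_cos_le_one _)
  simp_rw [mul_sub, mul_one]
  rw [integral_sub integrable_exp_neg_sq_norm_div_four hcos, integral_exp_neg_sq_norm_div_four,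
    integral_exp_neg_sq_norm_div_four_mul_cos_inner, ← mul_one_sub,
    inv_mul_cancel_left₀ (by positivity)]

theorem integral_one_sub_exp_neg_mul_sq_norm (ν : Measure V) [IsProbabilityMeasure ν]
    {lam : ℝ} (hlam : 0 ≤ lam) :
    ∫ x, (1 - exp (-lam * ‖x‖ ^ 2)) ∂ν = ((4 * π) ^ ((Module.finrank ℝ V : ℝ) / 2))⁻¹ *
      ∫ ξ : V, exp (-‖ξ‖ ^ 2 / 4) * (1 - ∫ x, cos ⟪√lam • ξ, x⟫_ℝ ∂ν) := by
  have hpointwise (x : V) : 1 - exp (-lam * ‖x‖ ^ 2) =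
      ((4 * π) ^ ((Module.finrank ℝ V : ℝ) / 2))⁻¹ *
        ∫ ξ : V, exp (-‖ξ‖ ^ 2 / 4) * (1 - cos ⟪√lam • ξ, x⟫_ℝ) := by
    have hnorm : -‖√lam • x‖ ^ 2 = -lam * ‖x‖ ^ 2 := by
      rw [norm_smul, mul_pow, norm_of_nonneg (sqrt_nonneg lam), sq_sqrt hlam, neg_mul]
    rw [← hnorm, one_sub_exp_neg_sq_norm_eq_integral]
    simp_rw [real_inner_smul_left, real_inner_comm]
  have hint : Integrable (Function.uncurry fun (x ξ : V) =>
      exp (-‖ξ‖ ^ 2 / 4) * (1 - cos ⟪√lam • ξ, x⟫_ℝ)) (ν.prod volume) :=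
    (integrable_exp_neg_sq_norm_div_four.comp_snd ν).mul_bdd (c := 2) (by fun_prop)
      (.of_forall fun p => by
        simp only [norm_eq_abs, abs_le]
        constructor <;>
          linarith [neg_one_le_cos ⟪√lam • p.2, p.1⟫_ℝ, cos_le_one ⟪√lam • p.2, p.1⟫_ℝ])
  have hcos (ξ : V) : Integrable (fun x => cos ⟪√lam • ξ, x⟫_ℝ) ν :=
    (integrable_const 1).mono' (by fun_prop) (.of_forall fun x => abs_cos_le_one _)
  simp_rw [hpointwise]
  rw [integral_const_mul, integral_integral_swap hint]
  congr 2 with ξ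
  rw [integral_const_mul, integral_sub (integrable_const 1) (hcos ξ), integral_const,
    probReal_univ, one_smul]

end Gaussian

/-- `2 π^{n/2} / Γ(n/2)` is the area of the unit sphere of `V`. -/
theorem integral_fun_norm_eq_mul_integral_Ioi {V : Type*} [NormedAddCommGroup V]
    [InnerProductSpace ℝ V] [FiniteDimensional ℝ V] [MeasurableSpace V] [BorelSpace V]
    [Nontrivial V] (g : ℝ → ℝ) :
    ∫ ξ : V, g ‖ξ‖ =
      2 * π ^ ((Module.finrank ℝ V : ℝ) / 2) / Gamma ((Module.finrank ℝ V : ℝ) / 2) *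
        ∫ r in Ioi 0, r ^ ((Module.finrank ℝ V : ℝ) - 1) * g r := by
  obtain ⟨n, hn⟩ : ∃ n, Module.finrank ℝ V = n := ⟨_, rfl⟩
  have hn_pos : 1 ≤ n := hn ▸ Module.finrank_pos
  rw [hn]
  have hball : volume.real (Metric.ball (0 : V) 1) = π ^ ((n : ℝ) / 2) / Gamma (n / 2 + 1) := by
    rw [measureReal_def, InnerProductSpace.volume_ball, ENNReal.ofReal_one, one_pow, one_mul,
      ENNReal.toReal_ofReal (by positivity), sqrt_eq_rpow, ← rpow_natCast,
      ← rpow_mul pi_pos.le, hn]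
    ring_nf
  have hsphere : n * (π ^ ((n : ℝ) / 2) / Gamma (n / 2 + 1)) =
      2 * π ^ ((n : ℝ) / 2) / Gamma (n / 2) := by
    rw [Gamma_add_one (by positivity)]
    field_simp
  rw [integral_fun_norm_addHaar, hball, hn, nsmul_eq_mul, smul_eq_mul, ← mul_assoc, hsphere]
  congr 1
  refine setIntegral_congr_fun measurableSet_Ioi fun r _ => ?_
  rw [smul_eq_mul, ← rpow_natCast, Nat.cast_sub hn_pos, Nat.cast_one]

theorem inv_four_mul_pi_rpow_mul_two_mul_pi_rpow_div_Gamma (s : ℝ) :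
    ((4 * π) ^ (s / 2))⁻¹ * (2 * π ^ (s / 2) / Gamma (s / 2)) =
      2 ^ (1 - s) / Gamma (s / 2) := by
  have h4 : (4 * π) ^ (s / 2) = 2 ^ s * π ^ (s / 2) := by
    rw [mul_rpow (by norm_num) pi_pos.le, show (4 : ℝ) = 2 ^ (2 : ℝ) by norm_num,
      ← rpow_mul (by norm_num)]
    ring_nf
  have hπ : 0 < π ^ (s / 2) := by positivity
  rw [h4, rpow_sub two_pos, rpow_one]
  field_simp

theorem stmt_4 (d : ℕ) (hd : 0 < d)
    (μ : ℝ → Measure (EuclideanSpace ℝ (Fin d)))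
    (hprob : ∀ t > (0 : ℝ), IsProbabilityMeasure (μ t))
    (ψ : ℝ → ℝ)
    (hchar : ∀ t > (0 : ℝ), ∀ ξ : EuclideanSpace ℝ (Fin d),
      ∫ x, Real.cos ⟪ξ, x⟫_ℝ ∂(μ t) = Real.exp (-t * ψ ‖ξ‖))
    (F : ℝ → ℝ → ℝ)
    (hF : ∀ t r, F t r = ((μ t) {x | Real.sqrt r ≤ ‖x‖}).toReal) :
    ∀ lam > (0 : ℝ), ∀ t > (0 : ℝ),
      lam * ∫ r in Ioi (0 : ℝ), Real.exp (-lam * r) * F t r =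
        ((2 : ℝ) ^ (1 - (d : ℝ)) / Real.Gamma ((d : ℝ) / 2)) *
          ∫ r in Ioi (0 : ℝ),
            (1 - Real.exp (-t * ψ (r * Real.sqrt lam))) *
              Real.exp (-r ^ 2 / 4) * r ^ ((d : ℝ) - 1) := by
  intro lam hlam t ht
  have := hprob t ht
  have : Nonempty (Fin d) := ⟨⟨0, hd⟩⟩
  have htail (r : ℝ) : F t r = (μ t).real {x | r ≤ ‖x‖ ^ 2} := by
    simp only [hF, measureReal_def, sqrt_le_iff, norm_nonneg, true_and]
  have hnorm (ξ : EuclideanSpace ℝ (Fin d)) : ‖√lam • ξ‖ = ‖ξ‖ * √lam := by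
    rw [norm_smul, norm_of_nonneg (sqrt_nonneg lam), mul_comm]
  simp_rw [htail]
  rw [mul_integral_exp_neg_mul_measureReal_le (μ t) (fun x => sq_nonneg ‖x‖) (by fun_prop) hlam,
    integral_one_sub_exp_neg_mul_sq_norm (μ t) hlam.le]
  simp_rw [hchar t ht, hnorm]
  rw [integral_fun_norm_eq_mul_integral_Ioi
      fun r => exp (-r ^ 2 / 4) * (1 - exp (-t * ψ (r * √lam))),
    finrank_euclideanSpace_fin, ← mul_assoc, inv_four_mul_pi_rpow_mul_two_mul_pi_rpow_div_Gamma]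
  congr 1
  refine setIntegral_congr_fun measurableSet_Ioi fun r _ => ?_
  ring
end

section
/- Let (F_t)_{t>0} be a family of nonincreasing nonnegative functions on [0,∞) and let ℱ_t(x) = ∫_0^x F_t(s) ds. Suppose that for some constants c > 0, β ∈ [0,1) and a function ψ: (0,∞) → (0,∞), the joint limit r ℱ_t(r^{-1}) / (t ψ(√r)) → c holds as r → 0⁺ and t ψ(√r) → 0, and that ψ is regularly varying at 0 of index 2β. Then F_t(r^{-1}) / (t ψ(√r)) → c(1-β) in the same joint limit. -/
open MeasureTheory Real Set Filter

lemma aux_bounds (f : ℝ → ℝ) (hmono : AntitoneOn f (Ici 0))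
    {a b : ℝ} (ha : 0 ≤ a) (hab : a ≤ b) :
    (b - a) * f b ≤ (∫ s in Ioc (0:ℝ) b, f s) - (∫ s in Ioc (0:ℝ) a, f s) ∧
      (∫ s in Ioc (0:ℝ) b, f s) - (∫ s in Ioc (0:ℝ) a, f s) ≤ (b - a) * f a := by
  have hb : (0:ℝ) ≤ b := ha.trans hab
  have hint : ∀ x y : ℝ, 0 ≤ x → 0 ≤ y → IntervalIntegrable f volume x y := by
    intro x y hx hy
    refine AntitoneOn.intervalIntegrable (hmono.mono ?_)
    intro z hz
    have h0 : min x y ≤ z := by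
      rcases hz with ⟨h1, _⟩
      simpa [Set.uIcc, min_def, max_def] using h1
    exact le_trans (le_min hx hy) h0
  have key : (∫ s in Ioc (0:ℝ) b, f s) - (∫ s in Ioc (0:ℝ) a, f s) = ∫ x in a..b, f x := by
    rw [← intervalIntegral.integral_of_le hb, ← intervalIntegral.integral_of_le ha,
      intervalIntegral.integral_interval_sub_left (hint 0 b le_rfl hb) (hint 0 a le_rfl ha)]
  rw [key]
  constructor
  · have h := intervalIntegral.integral_mono_on hab intervalIntegrable_const (hint a b ha hb)
      (fun x hx => hmono (le_trans ha hx.1) hb hx.2 : ∀ x ∈ Icc a b, (fun _ => f b) x ≤ f x)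
    simpa [intervalIntegral.integral_const, smul_eq_mul] using h
  · have h := intervalIntegral.integral_mono_on hab (hint a b ha hb) intervalIntegrable_const
      (fun x hx => hmono ha (le_trans ha hx.1) hx.1 : ∀ x ∈ Icc a b, f x ≤ (fun _ => f a) x)
    simpa [intervalIntegral.integral_const, smul_eq_mul] using h

lemma slope_lim1 (p : ℝ) :
    Tendsto (fun η : ℝ => (1 - (1-η) ^ p) / η) (nhdsWithin 0 (Ioi 0)) (nhds p) := by
  have hd : HasDerivAt (fun x : ℝ => (1-x) ^ p) (-p) 0 := by
    have h1 : HasDerivAt (fun x : ℝ => 1 - x) (-1) 0 := by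
      simpa using (hasDerivAt_id (0:ℝ)).const_sub 1
    have h2 := h1.rpow_const (p := p) (Or.inl (by norm_num))
    simpa [Real.one_rpow] using h2
  have hslope := hasDerivAt_iff_tendsto_slope.mp hd
  have hmono : nhdsWithin (0:ℝ) (Ioi 0) ≤ nhdsWithin (0:ℝ) {(0:ℝ)}ᶜ :=
    nhdsWithin_mono _ (fun x hx => ne_of_gt hx)
  have h3 : Tendsto (fun η : ℝ => ((1-η)^p - 1)/η) (nhdsWithin 0 (Ioi 0)) (nhds (-p)) := by
    refine (hslope.mono_left hmono).congr' ?_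
    filter_upwards [self_mem_nhdsWithin] with η hη
    simp [slope_def_field, Real.one_rpow]
  have := h3.neg
  simp only [neg_neg] at this
  refine this.congr (fun η => by ring)

lemma slope_lim2 (p : ℝ) :
    Tendsto (fun η : ℝ => ((1+η) ^ p - 1) / η) (nhdsWithin 0 (Ioi 0)) (nhds p) := by
  have hd : HasDerivAt (fun x : ℝ => (1+x) ^ p) p 0 := by
    have h1 : HasDerivAt (fun x : ℝ => 1 + x) 1 0 := by
      simpa using (hasDerivAt_id (0:ℝ)).const_add 1
    have h2 := h1.rpow_const (p := p) (Or.inl (by norm_num))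
    simpa [Real.one_rpow] using h2
  have hslope := hasDerivAt_iff_tendsto_slope.mp hd
  have hmono : nhdsWithin (0:ℝ) (Ioi 0) ≤ nhdsWithin (0:ℝ) {(0:ℝ)}ᶜ :=
    nhdsWithin_mono _ (fun x hx => ne_of_gt hx)
  refine (hslope.mono_left hmono).congr' ?_
  filter_upwards [self_mem_nhdsWithin] with η hη
  simp [slope_def_field, Real.one_rpow]

lemma triple_mul_le (k a b x y : ℝ) (hk : 0 ≤ k) (ha : 0 ≤ a) (hb : 0 ≤ b)
    (hax : a ≤ x) (hby : b ≤ y) : k * a * b ≤ k * x * y := by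
  have hx : 0 ≤ x := ha.trans hax
  nlinarith [mul_le_mul hax hby hb hx]

lemma up2_aux (η K c₀ e : ℝ) (hη : 0 < η) (hη' : η < 1/2) (hK1 : 1 ≤ K) (hK2 : K ≤ 2)
    (he : 0 < e) (hc : 0 ≤ c₀) :
    (1-η) * K * c₀ - e * (c₀+2) ≤ (1-η) * (c₀-e) * (K-e) := by
  have h1 : 0 ≤ e * (2 - K) := mul_nonneg he.le (by linarith)
  have h2 : 0 ≤ e * e * (1 - η) := mul_nonneg (mul_nonneg he.le he.le) (by linarith)
  have h3 : 0 ≤ e * η * (K + c₀) := mul_nonneg (mul_nonneg he.le hη.le) (by linarith)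
  nlinarith [h1, h2, h3]

lemma low2_aux (η K c₀ e : ℝ) (hη : 0 < η) (hη' : η < 1/2) (hK1 : 1/2 ≤ K) (hK2 : K ≤ 1)
    (he : 0 < e) (hc : 0 ≤ c₀) :
    (1+η) * K * c₀ - e * (2*c₀+3) ≤ (1+η) * (c₀-e) * (K-e) := by
  have h1 : 0 ≤ e * e * (1 + η) := mul_nonneg (mul_nonneg he.le he.le) (by linarith)
  have h2 : 0 ≤ e * (c₀/2 + 3 - 3/2*K) := mul_nonneg he.le (by linarith)
  have h3 : 0 ≤ e * ((1/2 - η) * (K + c₀)) :=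
    mul_nonneg he.le (mul_nonneg (by linarith) (by linarith))
  nlinarith [h1, h2, h3]

lemma eterm_aux (e c₀ E η : ℝ) (h : e * (4*(3+2*c₀)) ≤ E*η) (he : 0 ≤ e) (hc : 0 ≤ c₀) :
    e * (3+c₀) ≤ E*η/4 ∧ e * (2*c₀+4) ≤ E*η/2 := by
  constructor <;> nlinarith [mul_nonneg he hc]

lemma pos_div_aux (x η : ℝ) (hη : 0 < η) (h : 0 < x * η) : 0 < x := by
  by_contra h'
  push_neg at h'
  nlinarith

lemma alg_aux (k r r1 C tt S S1 : ℝ) (hrr : r = k * r1) (htt : tt ≠ 0)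
    (hS : S ≠ 0) (hS1 : S1 ≠ 0) :
    r * C / (tt * S) = k * (r1 * C / (tt * S1)) * (S1 / S) := by
  subst hrr; field_simp

set_option maxHeartbeats 2000000 in
theorem stmt_8 (F : ℝ → ℝ → ℝ)
    (hFnonneg : ∀ t > (0 : ℝ), ∀ s, 0 ≤ s → 0 ≤ F t s)
    (hFmono : ∀ t > (0 : ℝ), AntitoneOn (F t) (Ici 0))
    (calF : ℝ → ℝ → ℝ)
    (hcalF : ∀ t > (0 : ℝ), ∀ x, 0 ≤ x →
      calF t x = ∫ s in Ioc (0 : ℝ) x, F t s)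
    (c : ℝ) (hc : 0 < c) (β : ℝ) (hβ : β ∈ Ico (0 : ℝ) 1)
    (ψ : ℝ → ℝ) (hψpos : ∀ x > (0 : ℝ), 0 < ψ x)
    (hRV : ∀ lam > (0 : ℝ),
      Tendsto (fun x => ψ (lam * x) / ψ x) (nhdsWithin 0 (Ioi 0))
        (nhds (lam ^ (2 * β))))
    (hlim : ∀ ε > (0 : ℝ), ∃ δ > (0 : ℝ), ∀ r t : ℝ,
      0 < r → r < δ → 0 < t → t * ψ (Real.sqrt r) < δ →
      |r * calF t r⁻¹ / (t * ψ (Real.sqrt r)) - c| < ε) :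
    ∀ ε > (0 : ℝ), ∃ δ > (0 : ℝ), ∀ r t : ℝ,
      0 < r → r < δ → 0 < t → t * ψ (Real.sqrt r) < δ →
      |F t r⁻¹ / (t * ψ (Real.sqrt r)) - c * (1 - β)| < ε := by
  intro ε hε
  obtain ⟨hβ0, hβ1⟩ := hβ
  set p : ℝ := 1 - β with hpdef
  have hp0 : 0 < p := by simp only [hpdef]; linarith
  have hε8 : 0 < ε / (8 * (c + 1)) := by positivity
  -- choose η
  have e1 := Metric.tendsto_nhds.mp (slope_lim1 p) _ hε8
  have e2 := Metric.tendsto_nhds.mp (slope_lim2 p) _ hε8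
  have e3 : ∀ᶠ η in nhdsWithin (0:ℝ) (Ioi 0), η ∈ Ioo (0:ℝ) (1/2) :=
    Ioo_mem_nhdsGT_of_mem (by norm_num)
  obtain ⟨η, ⟨hηd1, hηd2⟩, hη0, hηh⟩ := ((e1.and e2).and e3).exists
  rw [Real.dist_eq] at hηd1 hηd2
  have h1η : 0 < 1 - η := by linarith
  have h1η' : 0 < 1 + η := by linarith
  -- epsilon_1
  set ε₁ : ℝ := min (min (c/2) 4⁻¹) (ε * η / (4 * (3 + 2*c))) with hε₁def
  have hε₁0 : 0 < ε₁ := by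
    refine lt_min (lt_min (by positivity) (by norm_num)) (by positivity)
  have hε₁c : ε₁ ≤ c/2 := le_trans (min_le_left _ _) (min_le_left _ _)
  have hε₁4 : ε₁ ≤ 4⁻¹ := le_trans (min_le_left _ _) (min_le_right _ _)
  have hε₁η : ε₁ ≤ ε * η / (4 * (3 + 2*c)) := min_le_right _ _
  obtain ⟨δ₀, hδ₀, H⟩ := hlim ε₁ hε₁0
  -- the two scaling constants
  set lam1 : ℝ := 1 / Real.sqrt (1 - η) with hlam1def
  set lam2 : ℝ := 1 / Real.sqrt (1 + η) with hlam2def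
  have hlam1 : 0 < lam1 := by rw [hlam1def]; positivity
  have hlam2 : 0 < lam2 := by rw [hlam2def]; positivity
  set K1 : ℝ := (1 - η) ^ (-β) with hK1def
  set K2 : ℝ := (1 + η) ^ (-β) with hK2def
  have hlam1eq : lam1 = (1 - η) ^ (-(1/2) : ℝ) := by
    rw [hlam1def, Real.rpow_neg h1η.le, ← Real.sqrt_eq_rpow, one_div]
  have hlam2eq : lam2 = (1 + η) ^ (-(1/2) : ℝ) := by
    rw [hlam2def, Real.rpow_neg h1η'.le, ← Real.sqrt_eq_rpow, one_div]
  have hlamK1 : lam1 ^ (2*β) = K1 := by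
    rw [hlam1eq, ← Real.rpow_mul h1η.le, hK1def]
    congr 1
    ring
  have hlamK2 : lam2 ^ (2*β) = K2 := by
    rw [hlam2eq, ← Real.rpow_mul h1η'.le, hK2def]
    congr 1
    ring
  -- bounds on K1, K2
  have hK1ge : 1 ≤ K1 :=
    Real.one_le_rpow_of_pos_of_le_one_of_nonpos h1η (by linarith) (by linarith)
  have hK1le : K1 ≤ 2 := by
    have h := Real.rpow_le_rpow_of_exponent_ge h1η (by linarith) (by linarith : (-1:ℝ) ≤ -β)
    rw [Real.rpow_neg_one] at h
    have h2 : (1 - η)⁻¹ ≤ 2 := by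
      rw [inv_le_comm₀ h1η (by norm_num)]
      linarith
    linarith
  have hK2le : K2 ≤ 1 :=
    Real.rpow_le_one_of_one_le_of_nonpos (by linarith) (by linarith)
  have hK2ge : 1/2 ≤ K2 := by
    have h := Real.rpow_le_rpow_of_exponent_le (by linarith : 1 ≤ 1 + η)
      (by linarith : (-1:ℝ) ≤ -β)
    rw [Real.rpow_neg_one] at h
    have h2 : (1/2 : ℝ) ≤ (1 + η)⁻¹ := by
      rw [le_inv_comm₀ (by norm_num) h1η']
      linarith
    linarith
  -- product identities
  have hP1 : (1 - η) * K1 = (1 - η) ^ p := by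
    have h := Real.rpow_add h1η 1 (-β)
    rw [Real.rpow_one] at h
    rw [hK1def, hpdef, show (1:ℝ) - β = 1 + (-β) by ring, h]
  have hP2 : (1 + η) * K2 = (1 + η) ^ p := by
    have h := Real.rpow_add h1η' 1 (-β)
    rw [Real.rpow_one] at h
    rw [hK2def, hpdef, show (1:ℝ) - β = 1 + (-β) by ring, h]
  -- RV deltas
  obtain ⟨δ₁, hδ₁, Hψ1⟩ := Metric.tendsto_nhdsWithin_nhds.mp (hRV lam1 hlam1) ε₁ hε₁0
  obtain ⟨δ₂, hδ₂, Hψ2⟩ := Metric.tendsto_nhdsWithin_nhds.mp (hRV lam2 hlam2) ε₁ hε₁0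
  refine ⟨min (min δ₀ ((1-η) * δ₀)) (min (δ₀/3) (min (δ₁^2) (δ₂^2))), by positivity, ?_⟩
  intro r t hr hrδ ht htψ
  have hrδ0 : r < δ₀ := lt_of_lt_of_le hrδ (le_trans (min_le_left _ _) (min_le_left _ _))
  have hrδη : r < (1-η) * δ₀ := lt_of_lt_of_le hrδ (le_trans (min_le_left _ _) (min_le_right _ _))
  have hrd1 : r < δ₁^2 := lt_of_lt_of_le hrδ
    (le_trans (min_le_right _ _) (le_trans (min_le_right _ _) (min_le_left _ _)))
  have hrd2 : r < δ₂^2 := lt_of_lt_of_le hrδ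
    (le_trans (min_le_right _ _) (le_trans (min_le_right _ _) (min_le_right _ _)))
  have htψ3 : t * ψ (Real.sqrt r) < δ₀/3 := lt_of_lt_of_le htψ
    (le_trans (min_le_right _ _) (min_le_left _ _))
  have hsr : 0 < Real.sqrt r := Real.sqrt_pos.mpr hr
  have hψr : 0 < ψ (Real.sqrt r) := hψpos _ hsr
  have hS : 0 < t * ψ (Real.sqrt r) := mul_pos ht hψr
  have hsr1 : Real.sqrt r < δ₁ := by
    calc Real.sqrt r < Real.sqrt (δ₁^2) := Real.sqrt_lt_sqrt hr.le hrd1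
    _ = δ₁ := by rw [Real.sqrt_sq hδ₁.le]
  have hsr2 : Real.sqrt r < δ₂ := by
    calc Real.sqrt r < Real.sqrt (δ₂^2) := Real.sqrt_lt_sqrt hr.le hrd2
    _ = δ₂ := by rw [Real.sqrt_sq hδ₂.le]
  -- the scaled radii
  set r1 : ℝ := r / (1 - η) with hr1def
  set r2 : ℝ := r / (1 + η) with hr2def
  have hr1pos : 0 < r1 := div_pos hr h1η
  have hr2pos : 0 < r2 := div_pos hr h1η'
  have hsqrt1 : Real.sqrt r1 = lam1 * Real.sqrt r := by
    rw [hr1def, Real.sqrt_div hr.le, hlam1def]; ring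
  have hsqrt2 : Real.sqrt r2 = lam2 * Real.sqrt r := by
    rw [hr2def, Real.sqrt_div hr.le, hlam2def]; ring
  have hψr1 : 0 < ψ (Real.sqrt r1) := hψpos _ (Real.sqrt_pos.mpr hr1pos)
  have hψr2 : 0 < ψ (Real.sqrt r2) := hψpos _ (Real.sqrt_pos.mpr hr2pos)
  -- ratio bounds
  have hQ1abs : |ψ (Real.sqrt r1) / ψ (Real.sqrt r) - K1| < ε₁ := by
    have h := Hψ1 (mem_Ioi.mpr hsr) (by rwa [Real.dist_eq, sub_zero, abs_of_pos hsr])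
    rw [Real.dist_eq, hlamK1, ← hsqrt1] at h
    exact h
  have hQ2abs : |ψ (Real.sqrt r2) / ψ (Real.sqrt r) - K2| < ε₁ := by
    have h := Hψ2 (mem_Ioi.mpr hsr) (by rwa [Real.dist_eq, sub_zero, abs_of_pos hsr])
    rw [Real.dist_eq, hlamK2, ← hsqrt2] at h
    exact h
  have hQ1b := abs_lt.mp hQ1abs
  have hQ2b := abs_lt.mp hQ2abs
  have hψ1eq : ψ (Real.sqrt r1) = (ψ (Real.sqrt r1) / ψ (Real.sqrt r)) * ψ (Real.sqrt r) := by
    field_simp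
  have hψ2eq : ψ (Real.sqrt r2) = (ψ (Real.sqrt r2) / ψ (Real.sqrt r)) * ψ (Real.sqrt r) := by
    field_simp
  -- apply hlim at r, r1, r2
  have H0 := H r t hr hrδ0 ht (by linarith)
  have Hc1 : t * ψ (Real.sqrt r1) < δ₀ := by
    rw [hψ1eq]
    have hlt : ψ (Real.sqrt r1) / ψ (Real.sqrt r) < 3 := by
      have := hQ1b.2; linarith [hε₁4]
    calc t * (ψ (Real.sqrt r1) / ψ (Real.sqrt r) * ψ (Real.sqrt r))
        = (ψ (Real.sqrt r1) / ψ (Real.sqrt r)) * (t * ψ (Real.sqrt r)) := by ring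
      _ < 3 * (δ₀/3) := by
          apply mul_lt_mul' hlt.le htψ3 hS.le (by norm_num)
      _ = δ₀ := by ring
  have Hc2 : t * ψ (Real.sqrt r2) < δ₀ := by
    rw [hψ2eq]
    have hlt : ψ (Real.sqrt r2) / ψ (Real.sqrt r) < 3 := by
      have := hQ2b.2; linarith [hε₁4]
    calc t * (ψ (Real.sqrt r2) / ψ (Real.sqrt r) * ψ (Real.sqrt r))
        = (ψ (Real.sqrt r2) / ψ (Real.sqrt r)) * (t * ψ (Real.sqrt r)) := by ring
      _ < 3 * (δ₀/3) := by
          apply mul_lt_mul' hlt.le htψ3 hS.le (by norm_num)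
      _ = δ₀ := by ring
  have hr1lt : r1 < δ₀ := by
    rw [hr1def, div_lt_iff₀ h1η]
    calc r < (1-η) * δ₀ := hrδη
    _ = δ₀ * (1-η) := by ring
  have hr2lt : r2 < δ₀ := lt_trans (by rw [hr2def]; exact div_lt_self hr (by linarith)) hrδ0
  have H1 := H r1 t hr1pos hr1lt ht Hc1
  have H2 := H r2 t hr2pos hr2lt ht Hc2
  have hA := abs_lt.mp H0
  have hA1 := abs_lt.mp H1
  have hA2 := abs_lt.mp H2
  -- integral inequalities
  have hrinv : 0 < r⁻¹ := inv_pos.mpr hr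
  have hrne : r ≠ 0 := ne_of_gt hr
  have hr1inv : r1⁻¹ = (1-η) * r⁻¹ := by
    rw [hr1def]; field_simp
  have hr2inv : r2⁻¹ = (1+η) * r⁻¹ := by
    rw [hr2def]; field_simp
  have hr1invpos : 0 < r1⁻¹ := inv_pos.mpr hr1pos
  have hle1 : r1⁻¹ ≤ r⁻¹ := by rw [hr1inv]; have := mul_nonneg hη0.le hrinv.le; linarith
  have hle2 : r⁻¹ ≤ r2⁻¹ := by rw [hr2inv]; have := mul_nonneg hη0.le hrinv.le; linarith
  have hb1 := (aux_bounds (F t) (hFmono t ht) hr1invpos.le hle1).1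
  have hb2 := (aux_bounds (F t) (hFmono t ht) hrinv.le hle2).2
  rw [← hcalF t ht r⁻¹ hrinv.le, ← hcalF t ht r1⁻¹ hr1invpos.le] at hb1
  rw [← hcalF t ht r2⁻¹ (by positivity), ← hcalF t ht r⁻¹ hrinv.le] at hb2
  have hdiff1 : η * F t r⁻¹ ≤ r * calF t r⁻¹ - r * calF t r1⁻¹ := by
    have heq : r⁻¹ - r1⁻¹ = η * r⁻¹ := by rw [hr1inv]; ring
    rw [heq] at hb1
    have h := mul_le_mul_of_nonneg_left hb1 hr.le
    have heq2 : r * (η * r⁻¹ * F t r⁻¹) = η * F t r⁻¹ := by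
      field_simp
    linarith [h, heq2]
  have hdiff2 : r * calF t r2⁻¹ - r * calF t r⁻¹ ≤ η * F t r⁻¹ := by
    have heq : r2⁻¹ - r⁻¹ = η * r⁻¹ := by rw [hr2inv]; ring
    rw [heq] at hb2
    have h := mul_le_mul_of_nonneg_left hb2 hr.le
    have heq2 : r * (η * r⁻¹ * F t r⁻¹) = η * F t r⁻¹ := by
      field_simp
    linarith [h, heq2]
  -- identities relating B's to A1, A2
  have htne : t ≠ 0 := ne_of_gt ht
  have hψrne : ψ (Real.sqrt r) ≠ 0 := ne_of_gt hψr
  have hψr1ne : ψ (Real.sqrt r1) ≠ 0 := ne_of_gt hψr1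
  have hψr2ne : ψ (Real.sqrt r2) ≠ 0 := ne_of_gt hψr2
  have hBeq1 : r * calF t r1⁻¹ / (t * ψ (Real.sqrt r)) =
      (1-η) * (r1 * calF t r1⁻¹ / (t * ψ (Real.sqrt r1))) *
        (ψ (Real.sqrt r1) / ψ (Real.sqrt r)) :=
    alg_aux (1-η) r r1 _ t _ _ (by rw [hr1def]; field_simp) htne hψrne hψr1ne
  have hBeq2 : r * calF t r2⁻¹ / (t * ψ (Real.sqrt r)) =
      (1+η) * (r2 * calF t r2⁻¹ / (t * ψ (Real.sqrt r2))) *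
        (ψ (Real.sqrt r2) / ψ (Real.sqrt r)) :=
    alg_aux (1+η) r r2 _ t _ _ (by rw [hr2def]; field_simp) htne hψrne hψr2ne
  -- main two-sided estimates on G * η
  have hGub : F t r⁻¹ / (t * ψ (Real.sqrt r)) * η ≤
      r * calF t r⁻¹ / (t * ψ (Real.sqrt r)) -
        (1-η) * (r1 * calF t r1⁻¹ / (t * ψ (Real.sqrt r1))) *
          (ψ (Real.sqrt r1) / ψ (Real.sqrt r)) := by
    rw [← hBeq1, ← sub_div]
    rw [show F t r⁻¹ / (t * ψ (Real.sqrt r)) * η = η * F t r⁻¹ / (t * ψ (Real.sqrt r)) by ring]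
    exact (div_le_div_iff_of_pos_right hS).mpr hdiff1
  have hGlb : (1+η) * (r2 * calF t r2⁻¹ / (t * ψ (Real.sqrt r2))) *
        (ψ (Real.sqrt r2) / ψ (Real.sqrt r)) -
      r * calF t r⁻¹ / (t * ψ (Real.sqrt r)) ≤
        F t r⁻¹ / (t * ψ (Real.sqrt r)) * η := by
    rw [← hBeq2, ← sub_div]
    rw [show F t r⁻¹ / (t * ψ (Real.sqrt r)) * η = η * F t r⁻¹ / (t * ψ (Real.sqrt r)) by ring]
    exact (div_le_div_iff_of_pos_right hS).mpr hdiff2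
  -- lower bounds on the triple products
  have hA1Q1 : (1-η) * (c-ε₁) * (K1-ε₁) ≤
      (1-η) * (r1 * calF t r1⁻¹ / (t * ψ (Real.sqrt r1))) *
        (ψ (Real.sqrt r1) / ψ (Real.sqrt r)) := by
    have h1 : (0:ℝ) ≤ c - ε₁ := by linarith
    have h2 : (0:ℝ) ≤ K1 - ε₁ := by linarith [hε₁4]
    have h3 : c - ε₁ ≤ r1 * calF t r1⁻¹ / (t * ψ (Real.sqrt r1)) := by linarith [hA1.1]
    have h4 : K1 - ε₁ ≤ ψ (Real.sqrt r1) / ψ (Real.sqrt r) := by linarith [hQ1b.1]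
    exact triple_mul_le _ _ _ _ _ h1η.le h1 h2 h3 h4
  have hA2Q2 : (1+η) * (c-ε₁) * (K2-ε₁) ≤
      (1+η) * (r2 * calF t r2⁻¹ / (t * ψ (Real.sqrt r2))) *
        (ψ (Real.sqrt r2) / ψ (Real.sqrt r)) := by
    have h1 : (0:ℝ) ≤ c - ε₁ := by linarith
    have h2 : (0:ℝ) ≤ K2 - ε₁ := by linarith [hε₁4]
    have h3 : c - ε₁ ≤ r2 * calF t r2⁻¹ / (t * ψ (Real.sqrt r2)) := by linarith [hA2.1]
    have h4 : K2 - ε₁ ≤ ψ (Real.sqrt r2) / ψ (Real.sqrt r) := by linarith [hQ2b.1]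
    exact triple_mul_le _ _ _ _ _ h1η'.le h1 h2 h3 h4
  -- purely numeric estimates
  have hup2 : (1-η) * K1 * c - ε₁ * (c+2) ≤ (1-η) * (c-ε₁) * (K1-ε₁) :=
    up2_aux η K1 c ε₁ hη0 hηh hK1ge hK1le hε₁0 hc.le
  have hlow2 : (1+η) * K2 * c - ε₁ * (2*c+3) ≤ (1+η) * (c-ε₁) * (K2-ε₁) :=
    low2_aux η K2 c ε₁ hη0 hηh hK2ge hK2le hε₁0 hc.le
  -- slope inequalities multiplied out
  have hsl1 : 1 - (1-η)^p < (p + ε / (8 * (c + 1))) * η := by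
    have h := (abs_lt.mp hηd1).2
    have h' : (1 - (1-η)^p)/η < p + ε / (8 * (c + 1)) := by linarith
    rw [div_lt_iff₀ hη0] at h'
    linarith
  have hsl2 : (p - ε / (8 * (c + 1))) * η < (1+η)^p - 1 := by
    have h := (abs_lt.mp hηd2).1
    have h' : p - ε / (8 * (c + 1)) < ((1+η)^p - 1)/η := by linarith
    rw [lt_div_iff₀ hη0] at h'
    linarith
  -- bound c * ε8 ≤ ε/8
  have hc8 : c * (ε / (8 * (c + 1))) ≤ ε / 8 := by
    rw [← mul_div_assoc, div_le_div_iff₀ (by positivity) (by norm_num)]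
    linarith
  -- bound ε₁ * (4*(3+2c)) ≤ ε*η
  have hd4 : ε₁ * (4 * (3 + 2*c)) ≤ ε * η := by
    rw [← le_div_iff₀ (by positivity)]
    exact hε₁η
  -- conclude
  rw [abs_lt]
  have hGη1 : F t r⁻¹ / (t * ψ (Real.sqrt r)) * η <
      c * (p + ε / (8 * (c + 1))) * η + ε₁ * (3 + c) := by
    have step : F t r⁻¹ / (t * ψ (Real.sqrt r)) * η <
        c + ε₁ - ((1-η) * K1 * c - ε₁ * (c+2)) := by
      linarith [hGub, hA1Q1, hup2, hA.2]
    have hcsl : c * (1 - (1-η)^p) ≤ c * ((p + ε / (8 * (c + 1))) * η) :=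
      mul_le_mul_of_nonneg_left hsl1.le hc.le
    rw [hP1] at step
    linarith [step, hcsl]
  have hGη2 : c * (p - ε / (8 * (c + 1))) * η - ε₁ * (2*c+4) <
      F t r⁻¹ / (t * ψ (Real.sqrt r)) * η := by
    have step : (1+η) * K2 * c - ε₁ * (2*c+3) - (c + ε₁) <
        F t r⁻¹ / (t * ψ (Real.sqrt r)) * η := by
      linarith [hGlb, hA2Q2, hlow2, hA.2]
    have hcsl : c * ((p - ε / (8 * (c + 1))) * η) ≤ c * ((1+η)^p - 1) :=
      mul_le_mul_of_nonneg_left hsl2.le hc.le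
    rw [hP2] at step
    linarith [step, hcsl]
  obtain ⟨hεterm1, hεterm2⟩ := eterm_aux ε₁ c ε η hd4 hε₁0.le hc.le
  have hce8 : c * (ε / (8 * (c + 1))) * η ≤ ε / 8 * η :=
    mul_le_mul_of_nonneg_right hc8 hη0.le
  constructor
  · have hmul : 0 < (F t r⁻¹ / (t * ψ (Real.sqrt r)) - c * (1 - β) + ε) * η := by
      have h1 : F t r⁻¹ / (t * ψ (Real.sqrt r)) * η >
          c * p * η - ε/8 * η - ε * η / 2 := by linarith [hGη2, hce8, hεterm2]
      have h2 : 0 < ε * η := mul_pos hε hη0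
      have h3 : c * p * η = c * (1 - β) * η := by rw [hpdef]
      linarith [h1, h2, h3]
    have := pos_div_aux _ _ hη0 hmul
    linarith
  · have hmul : 0 < (ε - (F t r⁻¹ / (t * ψ (Real.sqrt r)) - c * (1 - β))) * η := by
      have h1 : F t r⁻¹ / (t * ψ (Real.sqrt r)) * η <
          c * p * η + ε/8 * η + ε * η / 4 := by linarith [hGη1, hce8, hεterm1]
      have h2 : 0 < ε * η := mul_pos hε hη0
      have h3 : c * p * η = c * (1 - β) * η := by rw [hpdef]
      linarith [h1, h2, h3]
    have := pos_div_aux _ _ hη0 hmul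
    linarith
end
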